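/- For the permuted difference cycle 1 2 4 ... 2^k on n = 2^{k+1} - 1 vertices, the total number of top-dimensional simplices is k! · (2^{k+1} - 1), namely k! permutation classes each generating a full cyclic orbit of length n. -/

import Mathlib

/-!
The simplex of `(π, j)` is the translate `j + {s₀, …, s_k}` of the partial sums
`sᵢ = 2^{π 0} + ⋯ + 2^{π (i-1)}`, which satisfy `0 = s₀ < ⋯ < s_k = 2^k - 1`. If two such translates
agree, each base point lies in the other set: `j = j' + s'` and `j' = j + s`, so `s + s' ≡ 0`,
and `s + s' ≤ 2 (2^k - 1) < n` forces `j = j'`. The sets of partial sums then agree as sets of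
naturals, hence as increasing sequences, so their increments `2^{π l}` and finally `π` agree.
-/

open Finset

namespace Fin

variable {M : Type*} {n : ℕ}

theorem sum_filter_val_lt_eq_partialSum [AddCommMonoid M] (f : Fin n → M) (i : Fin (n + 1)) :
    ∑ l ∈ univ.filter (fun l : Fin n => (l : ℕ) < i), f l = partialSum f i := by
  induction i using Fin.induction with
  | zero => simp
  | succ j ih =>
    have hfilter : univ.filter (fun l : Fin n => (l : ℕ) < j.succ) =
        insert j (univ.filter (fun l : Fin n => (l : ℕ) < j.castSucc)) := by
      ext l
      simp only [mem_filter, mem_univ, true_and, mem_insert, val_succ, val_castSucc, Fin.ext_iff]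
      omega
    rw [hfilter, sum_insert (by simp), partialSum_succ, ← ih, add_comm]

theorem partialSum_last [AddCommMonoid M] (f : Fin n → M) :
    partialSum f (last n) = ∑ l, f l := by
  rw [← sum_filter_val_lt_eq_partialSum]
  simp

theorem partialSum_strictMono [AddMonoid M] [Preorder M] [AddLeftStrictMono M] {f : Fin n → M}
    (hf : ∀ l, 0 < f l) : StrictMono (partialSum f) :=
  strictMono_iff_lt_succ.2 fun l => by
    rw [partialSum_succ]
    exact lt_add_of_pos_right _ (hf l)

theorem partialSum_injective [AddLeftCancelMonoid M] :
    Function.Injective (partialSum : (Fin n → M) → Fin (n + 1) → M) := fun f g h =>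
  funext fun l => by
    have hl := congrFun h l.succ
    rwa [partialSum_succ, partialSum_succ, congrFun h l.castSucc, add_right_inj] at hl

end Fin

theorem ZMod.natCast_injOn_Iio (n : ℕ) : Set.InjOn (Nat.cast : ℕ → ZMod n) (Set.Iio n) :=
  fun a ha b hb hab => by
    rw [← ZMod.val_natCast_of_lt ha, ← ZMod.val_natCast_of_lt hb, hab]

theorem ZMod.eq_and_eq_of_image_add_natCast_eq {n M : ℕ} (hMn : 2 * M < n) {A B : Finset ℕ}
    (hA0 : 0 ∈ A) (hB0 : 0 ∈ B) (hA : ∀ a ∈ A, a ≤ M) (hB : ∀ b ∈ B, b ≤ M) {x y : ZMod n}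
    (h : A.image (fun a : ℕ => x + (a : ZMod n)) = B.image (fun b : ℕ => y + (b : ZMod n))) :
    x = y ∧ A = B := by
  obtain ⟨b, hb, hxb⟩ : ∃ b ∈ B, y + b = x := by
    rw [← mem_image, ← h]
    exact mem_image.2 ⟨0, hA0, by simp⟩
  obtain ⟨a, ha, hya⟩ : ∃ a ∈ A, x + a = y := by
    rw [← mem_image, h]
    exact mem_image.2 ⟨0, hB0, by simp⟩
  have hab : a + b = 0 := by
    refine Nat.eq_zero_of_dvd_of_lt ((ZMod.natCast_eq_zero_iff (a + b) n).1 ?_) ?_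
    · push_cast
      linear_combination hya + hxb
    · linarith [hA a ha, hB b hb]
  have hxy : x = y := by simpa [show b = 0 by omega] using hxb.symm
  subst hxy
  refine ⟨rfl, ?_⟩
  have hinj : Set.InjOn (fun a : ℕ => x + (a : ZMod n)) (Set.Iio n) :=
    (add_right_injective x).comp_injOn (ZMod.natCast_injOn_Iio n)
  have hsub : ∀ C : Finset ℕ, (∀ c ∈ C, c ≤ M) → (C : Set ℕ) ⊆ Set.Iio n := fun C hC c hc =>
    Set.mem_Iio.2 (by linarith [hC c hc])
  exact_mod_cast (hinj.image_eq_image_iff (hsub A hA) (hsub B hB)).1 (by exact_mod_cast h)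

theorem sum_two_pow_perm (k : ℕ) (π : Equiv.Perm (Fin k)) :
    ∑ l, 2 ^ (π l : ℕ) = 2 ^ k - 1 := by
  rw [Equiv.sum_comp π (fun m : Fin k => 2 ^ (m : ℕ)), Fin.sum_univ_eq_sum_range,
    Nat.geomSum_eq le_rfl]
  simp

def twoPowPartialSum {k : ℕ} (π : Equiv.Perm (Fin k)) : Fin (k + 1) → ℕ :=
  Fin.partialSum fun l => 2 ^ (π l : ℕ)

section TwoPowPartialSum

variable {k : ℕ}

theorem twoPowPartialSum_strictMono (π : Equiv.Perm (Fin k)) : StrictMono (twoPowPartialSum π) :=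
  Fin.partialSum_strictMono fun _ => Nat.two_pow_pos _

theorem twoPowPartialSum_le (π : Equiv.Perm (Fin k)) (i : Fin (k + 1)) :
    twoPowPartialSum π i ≤ 2 ^ k - 1 := by
  rw [← sum_two_pow_perm k π, ← Fin.partialSum_last]
  exact (twoPowPartialSum_strictMono π).monotone (Fin.le_last i)

theorem zero_mem_image_twoPowPartialSum (π : Equiv.Perm (Fin k)) :
    0 ∈ univ.image (twoPowPartialSum π) :=
  mem_image.2 ⟨0, mem_univ _, Fin.partialSum_zero _⟩

theorem twoPowPartialSum_injective : Function.Injective (twoPowPartialSum (k := k)) :=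
  fun _ _ h =>
    Equiv.ext fun l =>
      Fin.ext <| Nat.pow_right_injective le_rfl <| congrFun (Fin.partialSum_injective h) l

theorem eq_of_image_twoPowPartialSum_eq {π π' : Equiv.Perm (Fin k)}
    (h : univ.image (twoPowPartialSum π) = univ.image (twoPowPartialSum π')) : π = π' := by
  refine twoPowPartialSum_injective
    (((twoPowPartialSum_strictMono π).range_inj (twoPowPartialSum_strictMono π')).1 ?_)
  simpa [← Set.image_univ] using congrArg (fun s : Finset ℕ => (s : Set ℕ)) h

end TwoPowPartialSum

theorem stmt14_general (k n : ℕ) (hn : n = 2 ^ (k + 1) - 1) [NeZero n] :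
    Function.Injective (fun p : Equiv.Perm (Fin k) × ZMod n =>
      Finset.image (fun i : Fin (k + 1) =>
        p.2 + ∑ l ∈ Finset.univ.filter (fun l : Fin k => (l : ℕ) < (i : ℕ)),
          (2 : ZMod n) ^ ((p.1 l : ℕ))) Finset.univ) ∧
    Fintype.card (Equiv.Perm (Fin k) × ZMod n) =
      Nat.factorial k * (2 ^ (k + 1) - 1) := by
  have hsimplex (π : Equiv.Perm (Fin k)) (j : ZMod n) :
      univ.image (fun i : Fin (k + 1) =>
        j + ∑ l ∈ univ.filter (fun l : Fin k => (l : ℕ) < (i : ℕ)), (2 : ZMod n) ^ (π l : ℕ)) =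
      (univ.image (twoPowPartialSum π)).image (fun a : ℕ => j + (a : ZMod n)) := by
    rw [image_image]
    congr! 2 with i
    rw [Function.comp_apply, twoPowPartialSum, ← Fin.sum_filter_val_lt_eq_partialSum]
    push_cast
    rfl
  have hbound : 2 * (2 ^ k - 1) < n := by
    rw [hn, pow_succ]
    have := Nat.one_le_two_pow (n := k)
    omega
  refine ⟨?_, by rw [Fintype.card_prod, Fintype.card_perm, Fintype.card_fin, ZMod.card, hn]⟩
  rintro ⟨π, j⟩ ⟨π', j'⟩ h
  simp only [hsimplex] at h
  obtain ⟨rfl, hvertices⟩ := ZMod.eq_and_eq_of_image_add_natCast_eq hbound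
    (zero_mem_image_twoPowPartialSum π) (zero_mem_image_twoPowPartialSum π')
    (by simpa using twoPowPartialSum_le π) (by simpa using twoPowPartialSum_le π') h
  rw [eq_of_image_twoPowPartialSum_eq hvertices]

/-- For the permcycle 1 2 4 ... 2^k on n = 2^(k+1)-1 vertices: distinct pairs
(π, j) of a permutation of the first k entries and a starting vertex give
distinct simplices, and the number of such pairs is k!·(2^(k+1)-1). -/
theorem stmt14 (k n : ℕ) (hk : 1 ≤ k) (hn : n = 2 ^ (k + 1) - 1) [NeZero n] :
    Function.Injective (fun p : Equiv.Perm (Fin k) × ZMod n =>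
      Finset.image (fun i : Fin (k + 1) =>
        p.2 + ∑ l ∈ Finset.univ.filter (fun l : Fin k => (l : ℕ) < (i : ℕ)),
          (2 : ZMod n) ^ ((p.1 l : ℕ))) Finset.univ) ∧
    Fintype.card (Equiv.Perm (Fin k) × ZMod n) =
      Nat.factorial k * (2 ^ (k + 1) - 1) :=
  stmt14_general k n hn
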